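/- arXiv:0801.1606 — 2 statements merged into one kernel-verified Lean document; each statement's English description precedes it below -/
import Mathlib

section
/- Let n ≥ 2, let W ⊆ ℂⁿ be a real-linear subspace of real dimension n, and let w₁,…,wₙ be a basis of W orthonormal with respect to Re⟨·,·⟩. Then |det(w₁,…,wₙ)|⁴ = det(id_W + J_W ∘ J_W). (Equivalently, if ±i·cos θ₁, …, ±i·cos θ_m, with 0 ≤ θⱼ ≤ π/2 and m = ⌊n/2⌋, are the nonreal eigenvalue pairs of J_W, then |det(w₁,…,wₙ)| = Π_{j=1}^m sin θⱼ.) -/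
open MeasureTheory
open scoped ENNReal

noncomputable section

/-- `ℂⁿ`, regarded as a real inner product space via `Re⟨z,w⟫`. -/
abbrev Cn (n : ℕ) := EuclideanSpace ℂ (Fin n)

instance (n : ℕ) : MeasurableSpace (Cn n) := borel _
instance (n : ℕ) : BorelSpace (Cn n) := ⟨rfl⟩

/-- The determinant of the complex `n × n` matrix whose columns are `w 0, …, w (n-1)`. -/
def detC {n : ℕ} (w : Fin n → Cn n) : ℂ := Matrix.det (Matrix.of fun i j => w j i)

/-- `w` is a basis of the real subspace `W` which is orthonormal for the real inner
product `Re⟨·,·⟩` on `ℂⁿ`. -/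
def IsONBasisOf {n : ℕ} (w : Fin n → Cn n) (W : Submodule ℝ (Cn n)) : Prop :=
  (∀ i, w i ∈ W) ∧ Submodule.span ℝ (Set.range w) = W ∧ Orthonormal ℝ w

/-- Multiplication by `i` on `ℂⁿ`, as a real-linear endomorphism. -/
def Jmap (n : ℕ) : Cn n →ₗ[ℝ] Cn n :=
  ((Complex.I : ℂ) • (LinearMap.id : Cn n →ₗ[ℂ] Cn n)).restrictScalars ℝ

/-- `J_W = π_W ∘ J|_W : W → W`, where `π_W` is the orthogonal projection (w.r.t. the real
inner product `Re⟨·,·⟩`) onto the real subspace `W ⊆ ℂⁿ`. -/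
def JW {n : ℕ} (W : Submodule ℝ (Cn n)) : W →ₗ[ℝ] W :=
  (W.orthogonalProjection).toLinearMap ∘ₗ (Jmap n) ∘ₗ W.subtype


/-!
With `A = (w₁ ⋯ wₙ)`, the complex Gram matrix `G = (⟨wⱼ, wₖ⟩)ⱼₖ = AᴴA` has `det G = |det A|²`.
Since the `wⱼ` are orthonormal for `Re⟨·,·⟩`, `G = 1 - i M` with the real matrix
`Mⱼₖ = Re⟨wⱼ, i wₖ⟩`, which is exactly the matrix of `J_W` in the basis `w`. As `M` is real,
`det(1 + i M)` is the conjugate of `det(1 - i M)`, so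
`det(1 + M²) = det(1 - i M) det(1 + i M) = |det G|² = |det A|⁴`.
-/

open Matrix Complex ComplexConjugate

theorem Matrix.det_one_add_mul_self_eq_normSq {ι : Type*} [Fintype ι] [DecidableEq ι]
    (M : Matrix ι ι ℝ) : (1 + M * M).det = normSq (1 - I • M.map ofReal).det := by
  set N := M.map ofReal
  have hconj : (1 - I • N).map conj = 1 + I • N := by
    ext j k
    by_cases h : j = k <;> simp [N, h]
  have hfactor : ofRealHom.mapMatrix (1 + M * M) = (1 - I • N) * (1 + I • N) := by
    rw [map_add, map_one, map_mul]
    simp only [sub_mul, mul_add, one_mul, mul_one, smul_mul_smul_comm, I_mul_I, neg_one_smul]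
    abel
  apply ofReal_injective
  rw [← mul_conj, ← ofRealHom_eq_coe, RingHom.map_det, hfactor, det_mul, ← hconj,
    RingHom.map_det]
  rfl

section Cn

variable {n : ℕ}

theorem real_inner_eq_re_inner_Cn (x y : Cn n) : inner ℝ x y = (inner ℂ x y).re := by
  simp [PiLp.inner_apply, Complex.inner, Complex.re_sum]

theorem inner_eq_real_inner_sub_I_mul_real_inner_I_smul (x y : Cn n) :
    inner ℂ x y = inner ℝ x y - I * inner ℝ x (I • y) := by
  apply Complex.ext <;> simp [real_inner_eq_re_inner_Cn]

theorem gram_eq_one_sub_I_smul_of_orthonormal {ι : Type*} [DecidableEq ι] {w : ι → Cn n}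
    (hw : Orthonormal ℝ w) :
    gram ℂ w = 1 - I • (of fun j k => inner ℝ (w j) (I • w k)).map ofReal := by
  ext j k
  rw [gram_apply, inner_eq_real_inner_sub_I_mul_real_inner_I_smul, orthonormal_iff_ite.mp hw]
  simp [one_apply, apply_ite]

theorem det_gram_eq_normSq_detC (w : Fin n → Cn n) : (gram ℂ w).det = normSq (detC w) := by
  rw [gram_eq_conjTranspose_mul (EuclideanSpace.basisFun (Fin n) ℂ), det_mul, det_conjTranspose,
    ← mul_conj, mul_comm]
  rfl

theorem toMatrixOrthonormal_JW {ι : Type*} [Fintype ι] [DecidableEq ι] {W : Submodule ℝ (Cn n)}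
    (b : OrthonormalBasis ι ℝ W) :
    LinearMap.toMatrixOrthonormal b (JW W) =
      of fun j k => inner ℝ (b j : Cn n) (I • (b k : Cn n)) := by
  ext j k
  rw [LinearMap.toMatrixOrthonormal_apply_apply]
  exact Submodule.inner_orthogonalProjectionOnto_eq_of_mem_left (b j) _

namespace IsONBasisOf

variable {w : Fin n → Cn n} {W : Submodule ℝ (Cn n)}

theorem orthonormal_restrict (hw : IsONBasisOf w W) :
    Orthonormal ℝ (fun i => (⟨w i, hw.1 i⟩ : W)) :=
  hw.2.2

theorem span_restrict_eq_top (hw : IsONBasisOf w W) :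
    Submodule.span ℝ (Set.range fun i => (⟨w i, hw.1 i⟩ : W)) = ⊤ := by
  apply Submodule.map_injective_of_injective W.injective_subtype
  rw [Submodule.map_span, ← Set.range_comp, Submodule.map_subtype_top]
  exact hw.2.1

def orthonormalBasis (hw : IsONBasisOf w W) : OrthonormalBasis (Fin n) ℝ W :=
  OrthonormalBasis.mk hw.orthonormal_restrict hw.span_restrict_eq_top.ge

theorem coe_orthonormalBasis (hw : IsONBasisOf w W) (i : Fin n) :
    (hw.orthonormalBasis i : Cn n) = w i := by
  simp [orthonormalBasis]

end IsONBasisOf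

end Cn

theorem abs_detC_pow_four_general (n : ℕ) (W : Submodule ℝ (Cn n))
    (w : Fin n → Cn n) (hw : IsONBasisOf w W) :
    ‖detC w‖ ^ 4 =
      LinearMap.det ((LinearMap.id : W →ₗ[ℝ] W) + JW W ∘ₗ JW W) := by
  set b := hw.orthonormalBasis
  set M := LinearMap.toMatrixOrthonormal b (JW W)
  have hM : M = of fun j k => inner ℝ (w j) (I • w k) := by
    simp only [M, toMatrixOrthonormal_JW, b, hw.coe_orthonormalBasis]
  have hdet : LinearMap.det ((LinearMap.id : W →ₗ[ℝ] W) + JW W ∘ₗ JW W) = (1 + M * M).det := by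
    rw [← LinearMap.det_toMatrix b.toBasis]
    change (LinearMap.toMatrixOrthonormal b (1 + JW W * JW W)).det = _
    rw [map_add, map_one, map_mul]
  calc ‖detC w‖ ^ 4 = normSq (normSq (detC w)) := by
        rw [normSq_ofReal, normSq_eq_norm_sq]; ring
    _ = normSq (gram ℂ w).det := by rw [det_gram_eq_normSq_detC]
    _ = normSq (1 - I • M.map ofReal).det := by
        rw [gram_eq_one_sub_I_smul_of_orthonormal hw.2.2, hM]
    _ = (1 + M * M).det := (det_one_add_mul_self_eq_normSq M).symm
    _ = _ := hdet.symm

/-- For an `n`-dimensional real subspace `W ⊆ ℂⁿ` with orthonormal basis `w`, the fourth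
power of `|Θ(W)| = |det(w₁,…,wₙ)|` equals `det(id_W + J_W²)`. -/
theorem abs_detC_pow_four (n : ℕ) (hn : 2 ≤ n) (W : Submodule ℝ (Cn n))
    (hW : Module.finrank ℝ W = n) (w : Fin n → Cn n) (hw : IsONBasisOf w W) :
    ‖detC w‖ ^ 4 =
      LinearMap.det ((LinearMap.id : W →ₗ[ℝ] W) + JW W ∘ₗ JW W) :=
  abs_detC_pow_four_general n W w hw

end
end

section
/- Let n ≥ 2 and let k be a natural number with k ≠ n. Let W₁, W₂ ⊆ ℂⁿ be real-linear subspaces of real dimension k. If there exists g ∈ U(n) with g(W₁) = W₂, then there exists h ∈ SU(n) with h(W₁) = W₂. -/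
open MeasureTheory
open scoped ENNReal

noncomputable section

/-!
Given `g ∈ U(n)` with `g W₁ = W₂`, it suffices to find a unitary `M` with `det M = (det g)⁻¹`
and `M W₂ = W₂`; then `M g ∈ SU(n)`. For a unit vector `u`, the complex reflection
`1 + (ω - 1) u u*` with `|ω| = 1` is unitary of determinant `ω`, and it preserves `W₂` as soon as
the complex line `ℂ u` is either contained in `W₂` or Hermitian-orthogonal to it. Such a `u`
exists when `dim_ℝ W₂ ≠ n`: if `dim_ℝ W₂ < n`, the complex span of `W₂` is a proper complex
subspace; if `dim_ℝ W₂ > n`, then `W₂ ∩ i W₂ ≠ 0` by counting real dimensions in `ℂⁿ ≅ ℝ²ⁿ`.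
-/

open Matrix WithLp

namespace Matrix

variable {R ι : Type*} [CommRing R] [StarRing R] [DecidableEq ι]

def complexReflection [Fintype ι] (ω : R) (v : ι → R) : Matrix ι ι R :=
  1 + (ω - 1) • vecMulVec v (star v)

variable [Fintype ι] {v : ι → R}

lemma complexReflection_one (v : ι → R) : complexReflection 1 v = 1 := by
  simp [complexReflection]

lemma complexReflection_mul (hv : star v ⬝ᵥ v = 1) (ω₁ ω₂ : R) :
    complexReflection ω₁ v * complexReflection ω₂ v = complexReflection (ω₁ * ω₂) v := by
  have hP : vecMulVec v (star v) * vecMulVec v (star v) = vecMulVec v (star v) := by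
    rw [vecMulVec_mul_vecMulVec, hv, one_smul]
  simp only [complexReflection, add_mul, mul_add, one_mul, mul_one, smul_mul_assoc,
    mul_smul_comm, hP]
  module

lemma star_complexReflection (ω : R) (v : ι → R) :
    star (complexReflection ω v) = complexReflection (star ω) v := by
  simp [complexReflection, star_eq_conjTranspose, conjTranspose_vecMulVec]

lemma complexReflection_mem_unitaryGroup (hv : star v ⬝ᵥ v = 1) {ω : R} (hω : ω ∈ unitary R) :
    complexReflection ω v ∈ unitaryGroup ι R := by
  rw [mem_unitaryGroup_iff, star_complexReflection, complexReflection_mul hv,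
    Unitary.mul_star_self_of_mem hω, complexReflection_one]

lemma det_complexReflection (hv : star v ⬝ᵥ v = 1) (ω : R) : (complexReflection ω v).det = ω := by
  rw [complexReflection, ← vecMulVec_smul, vecMulVec_eq Unit,
    det_one_add_replicateCol_mul_replicateRow, smul_dotProduct, hv]
  simp

lemma complexReflection_mulVec (ω : R) (v x : ι → R) :
    complexReflection ω v *ᵥ x = x + ((ω - 1) * (star v ⬝ᵥ x)) • v := by
  simp [complexReflection, add_mulVec, smul_mulVec, vecMulVec_mulVec, mul_smul]

end Matrix

open Complex

lemma Submodule.smul_mem_of_mem_of_I_smul_mem {V : Type*} [AddCommGroup V] [Module ℂ V]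
    [Module ℝ V] [IsScalarTower ℝ ℂ V] (W : Submodule ℝ V) {x : V} (hx : x ∈ W)
    (hIx : I • x ∈ W) (c : ℂ) : c • x ∈ W := by
  have hc : c • x = c.re • x + c.im • I • x := by
    conv_lhs => rw [← re_add_im c, add_smul, mul_smul]
    simp only [← coe_algebraMap, algebraMap_smul]
  rw [hc]
  exact W.add_mem (W.smul_mem _ hx) (W.smul_mem _ hIx)

section

variable {ι : Type*} [Fintype ι]

lemma EuclideanSpace.star_ofLp_dotProduct_ofLp_of_norm_eq_one {u : EuclideanSpace ℂ ι}
    (hu : ‖u‖ = 1) : star (ofLp u) ⬝ᵥ ofLp u = 1 := by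
  rw [dotProduct_comm, ← EuclideanSpace.inner_eq_star_dotProduct, inner_self_eq_norm_sq_to_K, hu]
  simp

variable [DecidableEq ι]

lemma Matrix.toEuclideanLin_complexReflection_apply (ω : ℂ) (u x : EuclideanSpace ℂ ι) :
    toEuclideanLin (complexReflection ω (ofLp u)) x = x + ((ω - 1) * inner ℂ u x) • u := by
  simp [toLpLin_apply, complexReflection_mulVec, EuclideanSpace.inner_eq_star_dotProduct,
    dotProduct_comm]

lemma Matrix.map_toEuclideanLin_complexReflection_eq {ω : ℂ} (hω : ω ∈ unitary ℂ)
    {u : EuclideanSpace ℂ ι} (hu : ‖u‖ = 1) {W : Submodule ℝ (EuclideanSpace ℂ ι)}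
    (hW : (∀ x ∈ W, inner ℂ u x = 0) ∨ ∀ c : ℂ, c • u ∈ W) :
    W.map ((toEuclideanLin (complexReflection ω (ofLp u))).restrictScalars ℝ) = W := by
  set T : ℂ → EuclideanSpace ℂ ι →ₗ[ℝ] EuclideanSpace ℂ ι :=
    fun ω' ↦ (toEuclideanLin (complexReflection ω' (ofLp u))).restrictScalars ℝ
  have hmaps : ∀ ω', W.map (T ω') ≤ W := by
    rintro ω' _ ⟨x, hx, rfl⟩
    change toEuclideanLin _ x ∈ W
    rw [toEuclideanLin_complexReflection_apply]
    rcases hW with horth | hline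
    · simpa [horth x hx] using hx
    · exact W.add_mem hx (hline _)
  have hv := EuclideanSpace.star_ofLp_dotProduct_ofLp_of_norm_eq_one hu
  have hinv : T ω ∘ₗ T (star ω) = LinearMap.id := by
    rw [← LinearMap.restrictScalars_comp, ← toLpLin_mul, complexReflection_mul hv,
      Unitary.mul_star_self_of_mem hω, complexReflection_one, toLpLin_one]
    rfl
  refine le_antisymm (hmaps ω) ?_
  calc W = W.map (T ω ∘ₗ T (star ω)) := by rw [hinv, Submodule.map_id]
    _ = (W.map (T (star ω))).map (T ω) := Submodule.map_comp _ _ _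
    _ ≤ W.map (T ω) := Submodule.map_mono (hmaps _)

end

lemma Submodule.finrank_span_le_finrank_of_tower {K L V : Type*} [Field K] [Field L] [Algebra K L]
    [AddCommGroup V] [Module K V] [Module L V] [IsScalarTower K L V] (W : Submodule K V)
    [FiniteDimensional K W] :
    Module.finrank L (span L (W : Set V)) ≤ Module.finrank K W := by
  set b := Module.finBasis K W
  have hspan : span K (Set.range (W.subtype ∘ b)) = W := by
    rw [Set.range_comp, ← map_span, b.span_eq, map_subtype_top]
  calc Module.finrank L (span L (W : Set V))
      = Module.finrank L (span L (Set.range (W.subtype ∘ b))) := by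
        rw [← span_span_of_tower K L (Set.range (W.subtype ∘ b)), hspan]
    _ ≤ Fintype.card (Fin (Module.finrank K W)) := finrank_range_le_card _
    _ = Module.finrank K W := Fintype.card_fin _

section

variable {E : Type*} [NormedAddCommGroup E] [InnerProductSpace ℂ E] [FiniteDimensional ℂ E]
  {W : Submodule ℝ E}

lemma exists_ne_zero_forall_inner_eq_zero_of_finrank_lt
    (hW : Module.finrank ℝ W < Module.finrank ℂ E) :
    ∃ w : E, w ≠ 0 ∧ ∀ x ∈ W, inner ℂ w x = 0 := by
  set S := Submodule.span ℂ (W : Set E)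
  have hS : Module.finrank ℂ S < Module.finrank ℂ E :=
    W.finrank_span_le_finrank_of_tower.trans_lt hW
  have : 0 < Module.finrank ℂ Sᗮ := by
    have := S.finrank_add_finrank_orthogonal
    omega
  obtain ⟨⟨w, hw⟩, hw0⟩ := Module.finrank_pos_iff_exists_ne_zero.mp this
  exact ⟨w, by simpa using hw0,
    fun x hx ↦ S.inner_left_of_mem_orthogonal (Submodule.subset_span hx) hw⟩

lemma exists_ne_zero_forall_smul_mem_of_finrank_lt
    (hW : Module.finrank ℂ E < Module.finrank ℝ W) :
    ∃ w : E, w ≠ 0 ∧ ∀ c : ℂ, c • w ∈ W := by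
  let J : E ≃ₗ[ℝ] E := (LinearEquiv.smulOfNeZero ℂ E I I_ne_zero).restrictScalars ℝ
  have hJW : Module.finrank ℝ (W.comap (J : E →ₗ[ℝ] E)) = Module.finrank ℝ W := by
    rw [Submodule.comap_equiv_eq_map_symm, LinearEquiv.finrank_map_eq]
  have : ¬ Disjoint W (W.comap (J : E →ₗ[ℝ] E)) := fun hdisj ↦ by
    have := Submodule.finrank_add_finrank_le_of_disjoint hdisj
    rw [hJW, finrank_real_of_complex] at this
    omega
  obtain ⟨w, hw, hIw, hw0⟩ : ∃ w ∈ W, J w ∈ W ∧ w ≠ 0 := by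
    simpa [Submodule.disjoint_def] using this
  exact ⟨w, hw0, W.smul_mem_of_mem_of_I_smul_mem hw hIw⟩

lemma exists_norm_eq_one_forall_inner_eq_zero_or_forall_smul_mem
    (hW : Module.finrank ℝ W ≠ Module.finrank ℂ E) :
    ∃ u : E, ‖u‖ = 1 ∧ ((∀ x ∈ W, inner ℂ u x = 0) ∨ ∀ c : ℂ, c • u ∈ W) := by
  obtain ⟨w, hw0, hw⟩ : ∃ w : E, w ≠ 0 ∧ ((∀ x ∈ W, inner ℂ w x = 0) ∨ ∀ c : ℂ, c • w ∈ W) := by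
    rcases hW.lt_or_gt with hlt | hgt
    · obtain ⟨w, hw0, hw⟩ := exists_ne_zero_forall_inner_eq_zero_of_finrank_lt hlt
      exact ⟨w, hw0, .inl hw⟩
    · obtain ⟨w, hw0, hw⟩ := exists_ne_zero_forall_smul_mem_of_finrank_lt hgt
      exact ⟨w, hw0, .inr hw⟩
  refine ⟨(‖w‖⁻¹ : ℂ) • w, norm_smul_inv_norm hw0, hw.imp (fun h x hx ↦ ?_) (fun h c ↦ ?_)⟩
  · rw [inner_smul_left, h x hx, mul_zero]
  · rw [smul_smul]
    exact h _

end

theorem su_orbit_eq_u_orbit_of_dim_ne_general (n k : ℕ) (hk : k ≠ n)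
    (W₁ W₂ : Submodule ℝ (Cn n))
    (hW₂ : Module.finrank ℝ W₂ = k)
    (h : ∃ g ∈ Matrix.unitaryGroup (Fin n) ℂ,
        Submodule.map ((Matrix.toEuclideanLin g).restrictScalars ℝ) W₁ = W₂) :
    ∃ g ∈ Matrix.specialUnitaryGroup (Fin n) ℂ,
        Submodule.map ((Matrix.toEuclideanLin g).restrictScalars ℝ) W₁ = W₂ := by
  obtain ⟨g, hg, hgW⟩ := h
  obtain ⟨u, hu, hW⟩ := exists_norm_eq_one_forall_inner_eq_zero_or_forall_smul_mem
    (W := W₂) (by rwa [hW₂, finrank_euclideanSpace_fin])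
  have hv := EuclideanSpace.star_ofLp_dotProduct_ofLp_of_norm_eq_one hu
  have hdet : g.det ∈ unitary ℂ := det_of_mem_unitary hg
  have hω : star g.det ∈ unitary ℂ := Unitary.star_mem hdet
  refine ⟨complexReflection (star g.det) (ofLp u) * g, ?_, ?_⟩
  · rw [mem_specialUnitaryGroup_iff, det_mul, det_complexReflection hv]
    exact ⟨mul_mem (complexReflection_mem_unitaryGroup hv hω) hg,
      Unitary.star_mul_self_of_mem hdet⟩
  · rw [toLpLin_mul (q := 2), LinearMap.restrictScalars_comp, Submodule.map_comp, hgW,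
      map_toEuclideanLin_complexReflection_eq hω hu hW]

/-- For `k ≠ n`, the `U(n)`-orbits and the `SU(n)`-orbits of `k`-dimensional real
subspaces of `ℂⁿ` coincide. -/
theorem su_orbit_eq_u_orbit_of_dim_ne (n k : ℕ) (hn : 2 ≤ n) (hk : k ≠ n)
    (W₁ W₂ : Submodule ℝ (Cn n))
    (hW₁ : Module.finrank ℝ W₁ = k) (hW₂ : Module.finrank ℝ W₂ = k)
    (h : ∃ g ∈ Matrix.unitaryGroup (Fin n) ℂ,
        Submodule.map ((Matrix.toEuclideanLin g).restrictScalars ℝ) W₁ = W₂) :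
    ∃ g ∈ Matrix.specialUnitaryGroup (Fin n) ℂ,
        Submodule.map ((Matrix.toEuclideanLin g).restrictScalars ℝ) W₁ = W₂ :=
  su_orbit_eq_u_orbit_of_dim_ne_general n k hk W₁ W₂ hW₂ h

end
end
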